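/- Let m_n ∈ 𝓜 (n ∈ ℕ) be a sequence such that m_n(x) → 0 as n → ∞ for every x > 0 and ∫_{(0,1]} y dm_n(y) → 0 as n → ∞. Then for every integer k ≥ 1, sup_{y ∈ (0,1]} |G^{k+1}_{m_n}(y) / G^k_{m_n}(y)| → 0 as n → ∞ (the ratio is well defined since m_n is strictly increasing, whence (−1)^k G^k_{m_n} > 0 on (0,1]). -/

import Mathlib

open MeasureTheory Filter Topology Set
open scoped ENNReal NNReal

structure MString where
  m : ℝ → ℝ
  strict_mono : StrictMonoOn m (Set.Ioi 0)
  right_cont : ∀ x : ℝ, 0 < x → ContinuousWithinAt m (Set.Ici x) x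
  μ : Measure ℝ
  stieltjes : ∀ a b : ℝ, 0 < a → a ≤ b → μ (Set.Ioc a b) = ENNReal.ofReal (m b - m a)
  int_fin : ∫⁻ x in Set.Ioc (0:ℝ) 1, ENNReal.ofReal x ∂μ < ⊤

namespace MString

noncomputable def F (S : MString) (x : ℝ) : ℝ := ∫ y in Set.Ioc (0:ℝ) x, y ∂S.μ

noncomputable def E (S : MString) (d : ℕ) (lam x : ℝ) : ℝ :=
  (1 / (d.factorial : ℝ)) * (S.F x) ^ d * Real.exp (lam * S.F x)

noncomputable def sBul (f : ℝ → ℝ) (x : ℝ) : ℝ := ∫ y in (0:ℝ)..x, f y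

noncomputable def mBul (S : MString) (f : ℝ → ℝ) (x : ℝ) : ℝ :=
  ∫ y in Set.Ioc (0:ℝ) x, f y ∂S.μ

noncomputable def smIter (S : MString) : ℕ → (ℝ → ℝ) → ℝ → ℝ
  | 0, f => f
  | (k+1), f => sBul (mBul S (smIter S k f))

noncomputable def msIter (S : MString) : ℕ → (ℝ → ℝ) → ℝ → ℝ
  | 0, f => f
  | (k+1), f => mBul S (sBul (msIter S k f))

noncomputable def psi (S : MString) (lam x : ℝ) : ℝ :=
  ∑' k : ℕ, lam ^ k * smIter S k id x

noncomputable def psiPlus (S : MString) (lam x : ℝ) : ℝ :=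
  1 + ∑' k : ℕ, lam ^ (k + 1) * mBul S (smIter S k id) x

noncomputable def g (S : MString) (lam x : ℝ) : ℝ :=
  psi S lam x * ∫ y in Set.Ioi x, (psi S lam y ^ 2)⁻¹

noncomputable def mtilde (S : MString) (x : ℝ) : ℝ := S.m x - S.m 1

noncomputable def jInt (S : MString) (f : ℝ → ℝ) (y : ℝ) : ℝ :=
  if y ≤ 1 then ∫ z in Set.Ioc y 1, f z ∂S.μ else - ∫ z in Set.Ioc 1 y, f z ∂S.μ

noncomputable def G (S : MString) : ℕ → ℝ → ℝ
  | 0 => fun _ => 0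
  | 1 => fun x => ∫ y in (0:ℝ)..x, mtilde S y
  | (k+2) => fun x => - ∫ y in (0:ℝ)..x, jInt S (G S (k+1)) y

noncomputable def GBig (S : MString) (x : ℝ) : ℝ := ∫ y in (0:ℝ)..x, S.m y

noncomputable def intGdm (S : MString) (k : ℕ) : ℝ≥0∞ :=
  ∫⁻ x in Set.Ioc (0:ℝ) 1, ENNReal.ofReal ((-1 : ℝ) ^ k * G S k x) ∂S.μ

open scoped Classical in
noncomputable def dIdx (S : MString) : ℕ∞ :=
  if BddBelow (S.m '' Set.Ioc (0:ℝ) 1) then 0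
  else sInf {n : ℕ∞ | ∃ k : ℕ, n = (k : ℕ∞) ∧ 1 ≤ k ∧ intGdm S k < ⊤}

noncomputable def phi (S : MString) (d : ℕ) (lam x : ℝ) : ℝ :=
  1 + (∑ k ∈ Finset.Icc 1 d, lam ^ k * G S k x)
    + ∑' k : ℕ, lam ^ (d + k + 1) * smIter S (k + 1) (G S d) x

noncomputable def c (S : MString) (d : ℕ) (lam : ℝ) : ℝ :=
  (phi S d lam 1 - g S lam 1) / psi S lam 1

noncomputable def Sd (S : MString) (d : ℕ) (x : ℝ) : ℝ :=
  sSup ((fun y => |mBul S (G S d) y|) '' Set.Icc 0 x)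

end MString


/-!
Write `f_k = (-1)^k G_k` and `T g (x) = ∫_{(0,1]} min(z, x) g(z) dm(z)`. Exchanging the order of
integration in the definition of `G_{k+1}` gives `f_{k+1} = T f_k` for `k ≥ 1`, and `f_1 = T 1`,
so `f_k = T^k 1 ≥ 0`. The elementary inequality `min(z,x) · min(w,z) ≤ z · min(w,x)` shows
`min(z,x) · T g (z) ≤ z · T g (x)` for every `g ≥ 0`, and integrating against `dm(z)` gives
`f_{k+1}(x) ≤ F(1) · f_k(x)` with `F(1) = ∫_{(0,1]} z dm(z)`, which tends to `0`.
-/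

open ENNReal

lemma min_mul_min_le {x z w : ℝ} (hx : 0 ≤ x) (hz : 0 ≤ z) (hw : 0 ≤ w) :
    min z x * min w z ≤ z * min w x := by
  rcases le_total z x with hzx | hxz
  · rw [min_eq_left hzx]
    exact mul_le_mul_of_nonneg_left (min_le_min_left w hzx) hz
  · rw [min_eq_right hxz]
    rcases le_total w x with hwx | hxw
    · rw [min_eq_left hwx, min_eq_left (hwx.trans hxz)]
      exact mul_le_mul_of_nonneg_right hxz hw
    · rw [min_eq_right hxw, mul_comm z]
      exact mul_le_mul_of_nonneg_left (min_le_right w z) hx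

lemma volume_restrict_Ioc_zero_Iio (x z : ℝ) :
    volume.restrict (Ioc 0 x) (Iio z) = ENNReal.ofReal (min z x) := by
  rw [measure_congr Iio_ae_eq_Iic, Measure.restrict_apply measurableSet_Iic, inter_comm,
    Ioc_inter_Iic, Real.volume_Ioc, sub_zero, min_comm]

namespace MString

variable (S : MString)

lemma measure_Ioc_lt_top {a : ℝ} (ha : 0 < a) (b : ℝ) : S.μ (Ioc a b) < ⊤ := by
  rcases le_or_gt a b with hab | hba
  · rw [S.stieltjes a b ha hab]
    exact ofReal_lt_top
  · simp [Ioc_eq_empty_of_le hba.le]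

instance sigmaFinite_restrict_Ioc : SigmaFinite (S.μ.restrict (Ioc 0 1)) := by
  refine Measure.sigmaFinite_of_countable
    ((countable_range fun n : ℕ => Ioc (1 / (n + 1) : ℝ) 1).insert (Ioc 0 1)ᶜ) ?_ ?_
  · rintro s (rfl | ⟨n, rfl⟩)
    · simp [Measure.restrict_apply' measurableSet_Ioc]
    · exact (Measure.restrict_le_self _).trans_lt (S.measure_Ioc_lt_top (by positivity) 1)
  · refine sUnion_eq_univ_iff.2 fun x => ?_
    by_cases hx : x ∈ Ioc (0 : ℝ) 1
    · obtain ⟨n, hn⟩ := exists_nat_one_div_lt hx.1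
      exact ⟨_, Or.inr ⟨n, rfl⟩, hn, hx.2⟩
    · exact ⟨_, Or.inl rfl, hx⟩

lemma F_eq_toReal (x : ℝ) : S.F x = (∫⁻ z in Ioc 0 x, ENNReal.ofReal z ∂S.μ).toReal :=
  integral_eq_lintegral_of_nonneg_ae
    ((ae_restrict_iff' measurableSet_Ioc).2 (.of_forall fun _ hz => hz.1.le))
    measurable_id.aestronglyMeasurable

/-- The Green operator of `-(d/dm)(d/dx)` on `(0, 1]` with `f(0) = 0`, `f'(1) = 0`. -/
noncomputable def minKernel (g : ℝ → ℝ≥0∞) (x : ℝ) : ℝ≥0∞ :=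
  ∫⁻ z in Ioc 0 1, ENNReal.ofReal (min z x) * g z ∂S.μ

lemma monotone_minKernel (g : ℝ → ℝ≥0∞) : Monotone (S.minKernel g) := fun _ _ hxy =>
  lintegral_mono fun _ => mul_le_mul_left (ofReal_le_ofReal (min_le_min le_rfl hxy)) _

lemma lintegral_setLIntegral_Ioc_eq_minKernel {g : ℝ → ℝ≥0∞} (hg : Measurable g) (x : ℝ) :
    ∫⁻ y in Ioc 0 x, ∫⁻ z in Ioc y 1, g z ∂S.μ = S.minKernel g x := by
  have inner : ∀ y ∈ Ioc (0 : ℝ) x,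
      ∫⁻ z in Ioc y 1, g z ∂S.μ = ∫⁻ z in Ioc 0 1, (Iio z).indicator (fun _ => g z) y ∂S.μ := by
    intro y hy
    have swap : ∀ z, (Iio z).indicator (fun _ => g z) y = (Ioi y).indicator g z := fun z => by
      simp only [indicator_apply, mem_Iio, mem_Ioi]
    rw [lintegral_congr swap, lintegral_indicator measurableSet_Ioi,
      Measure.restrict_restrict measurableSet_Ioi, inter_comm, Ioc_inter_Ioi,
      max_eq_right hy.1.le]
  rw [setLIntegral_congr_fun measurableSet_Ioc inner, lintegral_lintegral_swap]
  · refine setLIntegral_congr_fun measurableSet_Ioc fun z _ => ?_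
    rw [lintegral_indicator_const measurableSet_Iio, volume_restrict_Ioc_zero_Iio, mul_comm]
  · exact ((hg.comp measurable_snd).indicator
      (measurableSet_lt measurable_fst measurable_snd)).aemeasurable

lemma setIntegral_setIntegral_Ioc_toReal {g : ℝ → ℝ≥0∞} (hg : Measurable g) {C : ℝ≥0∞}
    (hC : C ≠ ⊤) (hgC : ∀ z ∈ Ioc (0 : ℝ) 1, g z ≤ C) (x : ℝ) :
    ∫ y in Ioc 0 x, ∫ z in Ioc y 1, (g z).toReal ∂S.μ = (S.minKernel g x).toReal := by
  have antitone_tail : Antitone fun y => ∫⁻ z in Ioc y 1, g z ∂S.μ := fun _ _ h =>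
    lintegral_mono_set (Ioc_subset_Ioc_left h)
  have tail_lt_top : ∀ y ∈ Ioc (0 : ℝ) x, ∫⁻ z in Ioc y 1, g z ∂S.μ < ⊤ := fun y hy =>
    calc ∫⁻ z in Ioc y 1, g z ∂S.μ ≤ ∫⁻ _ in Ioc y 1, C ∂S.μ :=
          setLIntegral_mono measurable_const fun z hz => hgC z ⟨hy.1.trans hz.1, hz.2⟩
      _ = C * S.μ (Ioc y 1) := setLIntegral_const _ _
      _ < ⊤ := mul_lt_top hC.lt_top (S.measure_Ioc_lt_top hy.1 1)
  have inner : ∀ y ∈ Ioc (0 : ℝ) x,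
      ∫ z in Ioc y 1, (g z).toReal ∂S.μ = (∫⁻ z in Ioc y 1, g z ∂S.μ).toReal := fun y hy =>
    integral_toReal hg.aemeasurable ((ae_restrict_iff' measurableSet_Ioc).2
      (.of_forall fun z hz => (hgC z ⟨hy.1.trans hz.1, hz.2⟩).trans_lt hC.lt_top))
  rw [setIntegral_congr_fun measurableSet_Ioc inner,
    integral_toReal antitone_tail.measurable.aemeasurable
      ((ae_restrict_iff' measurableSet_Ioc).2 (.of_forall tail_lt_top)),
    S.lintegral_setLIntegral_Ioc_eq_minKernel hg]

lemma minKernel_le_mul {g : ℝ → ℝ≥0∞} {x : ℝ}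
    (hg : ∀ z ∈ Ioc (0 : ℝ) 1, ENNReal.ofReal (min z x) * g z ≤ ENNReal.ofReal z * g x) :
    S.minKernel g x ≤ (∫⁻ z in Ioc 0 1, ENNReal.ofReal z ∂S.μ) * g x :=
  calc S.minKernel g x ≤ ∫⁻ z in Ioc 0 1, ENNReal.ofReal z * g x ∂S.μ :=
        setLIntegral_mono (measurable_ofReal.mul_const _) hg
    _ = _ := lintegral_mul_const _ measurable_ofReal

lemma ofReal_min_mul_minKernel_le (g : ℝ → ℝ≥0∞) {x z : ℝ} (hx : 0 ≤ x) (hz : 0 ≤ z) :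
    ENNReal.ofReal (min z x) * S.minKernel g z ≤ ENNReal.ofReal z * S.minKernel g x := by
  simp only [minKernel, ← lintegral_const_mul' _ _ ofReal_ne_top, ← mul_assoc]
  refine lintegral_mono_ae ((ae_restrict_iff' measurableSet_Ioc).2 (.of_forall fun w hw => ?_))
  rw [← ofReal_mul (le_min hz hx), ← ofReal_mul hz]
  exact mul_le_mul_left (ofReal_le_ofReal (min_mul_min_le hx hz hw.1.le)) _

lemma iterate_minKernel_succ_le (k : ℕ) {x : ℝ} (hx : 0 ≤ x) :
    S.minKernel^[k + 1] 1 x ≤ (∫⁻ z in Ioc 0 1, ENNReal.ofReal z ∂S.μ) * S.minKernel^[k] 1 x := by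
  rw [Function.iterate_succ_apply']
  refine S.minKernel_le_mul fun z hz => ?_
  cases k with
  | zero => simp
  | succ k =>
    rw [Function.iterate_succ_apply']
    exact S.ofReal_min_mul_minKernel_le _ hx hz.1.le

lemma iterate_minKernel_le_pow (k : ℕ) {x : ℝ} (hx : 0 ≤ x) :
    S.minKernel^[k] 1 x ≤ (∫⁻ z in Ioc 0 1, ENNReal.ofReal z ∂S.μ) ^ k := by
  induction k with
  | zero => simp
  | succ k ih =>
    rw [pow_succ']
    exact (S.iterate_minKernel_succ_le k hx).trans (mul_le_mul_right ih _)

lemma measurable_iterate_minKernel (k : ℕ) : Measurable (S.minKernel^[k] 1) := by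
  cases k with
  | zero => exact measurable_one
  | succ k =>
    rw [Function.iterate_succ']
    exact (S.monotone_minKernel _).measurable

lemma setIntegral_setIntegral_Ioc_iterate_minKernel (k : ℕ) (x : ℝ) :
    ∫ y in Ioc 0 x, ∫ z in Ioc y 1, (S.minKernel^[k] 1 z).toReal ∂S.μ =
      (S.minKernel^[k + 1] 1 x).toReal := by
  rw [Function.iterate_succ_apply']
  exact S.setIntegral_setIntegral_Ioc_toReal (S.measurable_iterate_minKernel k)
    (pow_ne_top S.int_fin.ne) (fun z hz => S.iterate_minKernel_le_pow k hz.1.le) x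

lemma neg_one_pow_mul_G (k : ℕ) {x : ℝ} (hx : x ∈ Icc (0 : ℝ) 1) :
    (-1) ^ (k + 1) * S.G (k + 1) x = (S.minKernel^[k + 1] 1 x).toReal := by
  induction k generalizing x with
  | zero =>
    rw [← S.setIntegral_setIntegral_Ioc_iterate_minKernel 0 x, zero_add, pow_one, neg_one_mul]
    show -(∫ y in (0 : ℝ)..x, S.mtilde y) = _
    rw [intervalIntegral.integral_of_le hx.1, ← integral_neg]
    refine setIntegral_congr_fun measurableSet_Ioc fun y hy => ?_
    have hy1 : y ≤ 1 := hy.2.trans hx.2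
    simp only [Function.iterate_zero, id_eq, Pi.one_apply, toReal_one, setIntegral_const,
      smul_eq_mul, mul_one, measureReal_def, S.stieltjes y 1 hy.1 hy1, mtilde, neg_sub]
    exact (toReal_ofReal
      (sub_nonneg.2 (S.strict_mono.monotoneOn hy.1 (mem_Ioi.2 one_pos) hy1))).symm
  | succ k ih =>
    have hG : S.G (k + 2) x = -∫ y in (0 : ℝ)..x, S.jInt (S.G (k + 1)) y := rfl
    rw [← S.setIntegral_setIntegral_Ioc_iterate_minKernel (k + 1) x, hG,
      intervalIntegral.integral_of_le hx.1, pow_succ, mul_neg_one, neg_mul_neg,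
      ← integral_const_mul]
    refine setIntegral_congr_fun measurableSet_Ioc fun y hy => ?_
    rw [jInt, if_pos (hy.2.trans hx.2), ← integral_const_mul]
    exact setIntegral_congr_fun measurableSet_Ioc fun z hz =>
      ih ⟨hy.1.le.trans hz.1.le, hz.2⟩

lemma abs_G_eq_toReal (k : ℕ) {x : ℝ} (hx : x ∈ Icc (0 : ℝ) 1) :
    |S.G (k + 1) x| = (S.minKernel^[k + 1] 1 x).toReal := by
  rw [← abs_of_nonneg toReal_nonneg, ← S.neg_one_pow_mul_G k hx, abs_mul, abs_pow, abs_neg,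
    abs_one, one_pow, one_mul]

lemma abs_G_succ_div_G_le (k : ℕ) {x : ℝ} (hx : x ∈ Icc (0 : ℝ) 1) :
    |S.G (k + 2) x / S.G (k + 1) x| ≤ S.F 1 := by
  rw [abs_div, S.abs_G_eq_toReal (k + 1) hx, S.abs_G_eq_toReal k hx, S.F_eq_toReal, ← toReal_div]
  exact toReal_mono S.int_fin.ne (div_le_of_le_mul (S.iterate_minKernel_succ_le (k + 1) hx.1))

end MString

theorem stmt11_general (Sn : ℕ → MString)
    (hint : Tendsto (fun n => MString.F (Sn n) 1) atTop (nhds 0)) :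
    ∀ k : ℕ, 1 ≤ k →
      Tendsto
        (fun n => sSup ((fun y => |MString.G (Sn n) (k + 1) y / MString.G (Sn n) k y|)
          '' Set.Ioc (0:ℝ) 1)) atTop (nhds 0) := by
  intro k hk
  obtain ⟨j, rfl⟩ := Nat.exists_eq_add_of_le' hk
  refine squeeze_zero (fun n => Real.sSup_nonneg ?_) (fun n => Real.sSup_le ?_ ?_) hint
  · rintro _ ⟨y, -, rfl⟩
    exact abs_nonneg _
  · rintro _ ⟨y, hy, rfl⟩
    exact (Sn n).abs_G_succ_div_G_le j (Ioc_subset_Icc_self hy)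
  · rw [(Sn n).F_eq_toReal]
    exact ENNReal.toReal_nonneg

theorem stmt11 (Sn : ℕ → MString)
    (hm : ∀ x : ℝ, 0 < x → Tendsto (fun n => (Sn n).m x) atTop (nhds 0))
    (hint : Tendsto (fun n => MString.F (Sn n) 1) atTop (nhds 0)) :
    ∀ k : ℕ, 1 ≤ k →
      Tendsto
        (fun n => sSup ((fun y => |MString.G (Sn n) (k + 1) y / MString.G (Sn n) k y|)
          '' Set.Ioc (0:ℝ) 1)) atTop (nhds 0) :=
  stmt11_general Sn hint
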